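/- Augmentation: for all extended programs P, U, V with U ⊆ V, the extended WS-models and the extended RD-models of the dynamic logic program ⟨P, U, V⟩ coincide with those of ⟨P, V⟩, i.e. WS'(⟨P, U, V⟩) = WS'(⟨P, V⟩) and RD'(⟨P, U, V⟩) = RD'(⟨P, V⟩). -/
import Mathlib


namespace RuleUpdates

/-- Objective literal: an atom (a natural number) or its strong negation. -/
inductive OLit where
  | pos : ℕ → OLit
  | neg : ℕ → OLit
deriving DecidableEq

/-- Strong negation on objective literals (with ¬¬p identified with p). -/
def OLit.compl : OLit → OLit
  | .pos p => .neg p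
  | .neg p => .pos p

/-- Literal: an objective literal or its default negation (not not l = l). -/
inductive Lit where
  | obj : OLit → Lit
  | ndef : OLit → Lit
deriving DecidableEq

/-- Extended rule: a head literal and a finite set of body literals. -/
structure Rule where
  head : Lit
  body : Finset Lit

/-- Interpretation: a consistent set of objective literals. -/
def Interp (J : Set OLit) : Prop :=
  ∀ p : ℕ, ¬ (OLit.pos p ∈ J ∧ OLit.neg p ∈ J)

/-- Satisfaction of a literal. -/
def satLit (J : Set OLit) : Lit → Prop
  | .obj l => l ∈ J
  | .ndef l => l ∉ J

/-- Satisfaction of a set of body literals. -/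
def satBody (J : Set OLit) (B : Finset Lit) : Prop :=
  ∀ L ∈ B, satLit J L

/-- Satisfaction of a rule. -/
def satRule (J : Set OLit) (π : Rule) : Prop :=
  satBody J π.body → satLit J π.head

/-- J is a model of a program. -/
def isModel (J : Set OLit) (P : Set Rule) : Prop :=
  ∀ π ∈ P, satRule J π

/-- J* = J ∪ { not l | l ∈ ℒ ∖ J }, as a set of literals. -/
def star (J : Set OLit) : Set Lit :=
  {L | ∃ l : OLit, (L = Lit.obj l ∧ l ∈ J) ∨ (L = Lit.ndef l ∧ l ∉ J)}

/-- def(J) = { (not l.) | l ∈ ℒ ∖ J }. -/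
def defFacts (J : Set OLit) : Set Rule :=
  {π | ∃ l : OLit, l ∉ J ∧ π = ⟨Lit.ndef l, ∅⟩}

/-- S (a set of literals) is closed under program P, all literals
treated as distinct propositional atoms. -/
def closedUnder (P : Set Rule) (S : Set Lit) : Prop :=
  ∀ π ∈ P, (π.body : Set Lit) ⊆ S → π.head ∈ S

/-- least(P): the least model of P when all literals are treated as
distinct propositional atoms. -/
def leastModel (P : Set Rule) : Set Lit :=
  ⋂₀ {S | closedUnder P S}

/-- Stable model of an extended program: J* = least(P ∪ def(J)). -/
def isStableModel (P : Set Rule) (J : Set OLit) : Prop :=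
  Interp J ∧ star J = leastModel (P ∪ defFacts J)

/-- Level of a literal, with ℓ(not l) = ℓ(l). -/
def litLevel (ℓ : OLit → ℕ) : Lit → ℕ
  | .obj l => ℓ l
  | .ndef l => ℓ l

/-- ℓ↑(S): the maximal level of a literal in the finite set S. -/
def supLevel (ℓ : OLit → ℕ) (S : Finset Lit) : ℕ :=
  S.sup (litLevel ℓ)

/-- ℓ↓(S): the minimal level of a literal in the finite set S. -/
noncomputable def infLevel (ℓ : OLit → ℕ) (S : Finset Lit) : ℕ :=
  sInf (litLevel ℓ '' (S : Set Lit))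

/-- Well-supported model of an extended program w.r.t. a level mapping ℓ. -/
def isWSModelWith (P : Set Rule) (J : Set OLit) (ℓ : OLit → ℕ) : Prop :=
  isModel J P ∧
    ∀ l ∈ J, ∃ π ∈ P, π.head = Lit.obj l ∧ satBody J π.body ∧
      supLevel ℓ π.body < ℓ l

/-- Well-supported model of an extended program. -/
def isWSModel (P : Set Rule) (J : Set OLit) : Prop :=
  Interp J ∧ ∃ ℓ : OLit → ℕ, isWSModelWith P J ℓ

/-- con(L): the literals in conflict with L. -/
def con : Lit → Finset Lit
  | .obj l => {Lit.ndef l, Lit.obj l.compl}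
  | .ndef l => {Lit.obj l}

/-- ρ(P): all rules occurring in the components of the DLP. -/
def allRules {n : ℕ} (P : Fin n → Set Rule) : Set Rule :=
  {π | ∃ i : Fin n, π ∈ P i}

/-- The rule π ∈ P i is rejected w.r.t. the set of literals S:
some later σ with conflicting head has its body included in S. -/
def rejIn {n : ℕ} (P : Fin n → Set Rule) (S : Set Lit) (i : Fin n) (π : Rule) : Prop :=
  ∃ j : Fin n, i < j ∧ ∃ σ ∈ P j, σ.head ∈ con π.head ∧ (σ.body : Set Lit) ⊆ S

/-- rem(P, S) = ρ(P) ∖ rej(P, S), as a set of component-indexed rules. -/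
def remSet {n : ℕ} (P : Fin n → Set Rule) (S : Set Lit) : Set (Fin n × Rule) :=
  {x | x.2 ∈ P x.1 ∧ ¬ rejIn P S x.1 x.2}

/-- The operator T_{P,J}. -/
def TOp {n : ℕ} (P : Fin n → Set Rule) (J : Set OLit) (S : Set Lit) : Set Lit :=
  {L | ((∃ x ∈ remSet P (star J), x.2.head = L ∧ (x.2.body : Set Lit) ⊆ S) ∨
        (∃ l : OLit, l ∉ J ∧ L = Lit.ndef l)) ∧
       ¬ ∃ σ ∈ remSet P S, σ.2.head ∈ con L ∧ (σ.2.body : Set Lit) ⊆ star J}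

/-- Iterates of T_{P,J} starting from ∅. -/
def TIter {n : ℕ} (P : Fin n → Set Rule) (J : Set OLit) : ℕ → Set Lit
  | 0 => ∅
  | k + 1 => TOp P J (TIter P J k)

/-- Extended RD-model of a DLP: J* = ⋃_{k≥0} T_{P,J}^k(∅). -/
def isExtRD {n : ℕ} (P : Fin n → Set Rule) (J : Set OLit) : Prop :=
  Interp J ∧ star J = ⋃ k : ℕ, TIter P J k

/-- rej^ℓ(P, J): π ∈ P i is rejected w.r.t. J and the level mapping ℓ. -/
def rejLvl {n : ℕ} (P : Fin n → Set Rule) (J : Set OLit) (ℓ : OLit → ℕ)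
    (i : Fin n) (π : Rule) : Prop :=
  ∃ j : Fin n, i < j ∧ ∃ σ ∈ P j, σ.head ∈ con π.head ∧ satBody J σ.body ∧
    supLevel ℓ σ.body < infLevel ℓ (con π.head)

/-- Extended WS-model of a DLP. -/
def isExtWS {n : ℕ} (P : Fin n → Set Rule) (J : Set OLit) : Prop :=
  Interp J ∧ ∃ ℓ : OLit → ℕ,
    (∀ i : Fin n, ∀ π ∈ P i, ¬ rejLvl P J ℓ i π → satRule J π) ∧
    (∀ l ∈ J, ∃ x ∈ remSet P (star J), x.2.head = Lit.obj l ∧ satBody J x.2.body ∧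
      supLevel ℓ x.2.body < ℓ l)

/-- A program is acyclic w.r.t. a level mapping ℓ. -/
def acyclicWrt (Q : Set Rule) (ℓ : OLit → ℕ) : Prop :=
  (∀ l : OLit, ℓ l = ℓ l.compl) ∧ ∀ π ∈ Q, supLevel ℓ π.body < litLevel ℓ π.head


section Aux

variable {P U V : Set Rule}

/-- Rejection by a rule of `V` w.r.t. body condition `S`. -/
def RejBy (V : Set Rule) (S : Set Lit) (π : Rule) : Prop :=
  ∃ σ ∈ V, σ.head ∈ con π.head ∧ (σ.body : Set Lit) ⊆ S

lemma rejIn3 (hUV : U ⊆ V) (S : Set Lit) (i : Fin 3) (π : Rule) :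
    rejIn ![P, U, V] S i π ↔ (i = 0 ∨ i = 1) ∧ RejBy V S π := by
  constructor
  · rintro ⟨j, hij, σ, hσ, h1, h2⟩
    rcases (show j = 0 ∨ j = 1 ∨ j = 2 by fin_cases j <;> simp) with rfl | rfl | rfl
    · exact absurd hij (by fin_cases i <;> decide)
    · exact ⟨by fin_cases i <;> simp_all, σ, hUV hσ, h1, h2⟩
    · exact ⟨by fin_cases i <;> simp_all, σ, hσ, h1, h2⟩
  · rintro ⟨hi, σ, hσ, h1, h2⟩
    rcases hi with rfl | rfl
    · exact ⟨2, by decide, σ, hσ, h1, h2⟩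
    · exact ⟨2, by decide, σ, hσ, h1, h2⟩

lemma rejIn2 (S : Set Lit) (i : Fin 2) (π : Rule) :
    rejIn ![P, V] S i π ↔ i = 0 ∧ RejBy V S π := by
  constructor
  · rintro ⟨j, hij, σ, hσ, h1, h2⟩
    rcases (show j = 0 ∨ j = 1 by fin_cases j <;> simp) with rfl | rfl
    · exact absurd hij (by fin_cases i <;> decide)
    · exact ⟨by fin_cases i <;> simp_all, σ, hσ, h1, h2⟩
  · rintro ⟨rfl, σ, hσ, h1, h2⟩
    exact ⟨1, by decide, σ, hσ, h1, h2⟩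

lemma exRem3 (hUV : U ⊆ V) (S : Set Lit) (Q : Rule → Prop) :
    (∃ x ∈ remSet ![P, U, V] S, Q x.2) ↔
      ∃ π, ((π ∈ P ∧ ¬ RejBy V S π) ∨ π ∈ V) ∧ Q π := by
  constructor
  · rintro ⟨⟨i, π⟩, ⟨hmem, hrej⟩, hQ⟩
    rw [rejIn3 hUV] at hrej
    rcases (show i = 0 ∨ i = 1 ∨ i = 2 by fin_cases i <;> simp) with rfl | rfl | rfl
    · exact ⟨π, Or.inl ⟨hmem, fun h => hrej ⟨Or.inl rfl, h⟩⟩, hQ⟩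
    · exact ⟨π, Or.inr (hUV hmem), hQ⟩
    · exact ⟨π, Or.inr hmem, hQ⟩
  · rintro ⟨π, h | hV, hQ⟩
    · exact ⟨(0, π), ⟨h.1, by rw [rejIn3 hUV]; rintro ⟨-, hr⟩; exact h.2 hr⟩, hQ⟩
    · exact ⟨(2, π), ⟨hV, by rw [rejIn3 hUV]; rintro ⟨h | h, -⟩ <;> simp at h⟩, hQ⟩

lemma exRem2 (S : Set Lit) (Q : Rule → Prop) :
    (∃ x ∈ remSet ![P, V] S, Q x.2) ↔
      ∃ π, ((π ∈ P ∧ ¬ RejBy V S π) ∨ π ∈ V) ∧ Q π := by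
  constructor
  · rintro ⟨⟨i, π⟩, ⟨hmem, hrej⟩, hQ⟩
    rw [rejIn2] at hrej
    rcases (show i = 0 ∨ i = 1 by fin_cases i <;> simp) with rfl | rfl
    · exact ⟨π, Or.inl ⟨hmem, fun h => hrej ⟨rfl, h⟩⟩, hQ⟩
    · exact ⟨π, Or.inr hmem, hQ⟩
  · rintro ⟨π, h | hV, hQ⟩
    · exact ⟨(0, π), ⟨h.1, by rw [rejIn2]; rintro ⟨-, hr⟩; exact h.2 hr⟩, hQ⟩
    · exact ⟨(1, π), ⟨hV, by rw [rejIn2]; rintro ⟨h, -⟩; simp at h⟩, hQ⟩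

lemma exRem_iff (hUV : U ⊆ V) (S : Set Lit) (Q : Rule → Prop) :
    (∃ x ∈ remSet ![P, U, V] S, Q x.2) ↔ (∃ x ∈ remSet ![P, V] S, Q x.2) :=
  (exRem3 hUV S Q).trans (exRem2 S Q).symm

lemma TOp_eq (hUV : U ⊆ V) (J : Set OLit) (S : Set Lit) :
    TOp ![P, U, V] J S = TOp ![P, V] J S :=
  Set.ext fun L =>
    and_congr
      (or_congr
        (exRem_iff hUV (star J) (fun π => π.head = L ∧ (π.body : Set Lit) ⊆ S))
        Iff.rfl)
      (not_congr
        (exRem_iff hUV S (fun π => π.head ∈ con L ∧ (π.body : Set Lit) ⊆ star J)))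

lemma TIter_eq (hUV : U ⊆ V) (J : Set OLit) (k : ℕ) :
    TIter ![P, U, V] J k = TIter ![P, V] J k := by
  induction k with
  | zero => rfl
  | succ k ih => rw [TIter, TIter, ih, TOp_eq hUV]

/-- Level rejection by a rule of `V`. -/
def RejLvlBy (V : Set Rule) (J : Set OLit) (ℓ : OLit → ℕ) (π : Rule) : Prop :=
  ∃ σ ∈ V, σ.head ∈ con π.head ∧ satBody J σ.body ∧
    supLevel ℓ σ.body < infLevel ℓ (con π.head)

lemma rejLvl3 (hUV : U ⊆ V) (J : Set OLit) (ℓ : OLit → ℕ) (i : Fin 3) (π : Rule) :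
    rejLvl ![P, U, V] J ℓ i π ↔ (i = 0 ∨ i = 1) ∧ RejLvlBy V J ℓ π := by
  constructor
  · rintro ⟨j, hij, σ, hσ, h1, h2, h3⟩
    rcases (show j = 0 ∨ j = 1 ∨ j = 2 by fin_cases j <;> simp) with rfl | rfl | rfl
    · exact absurd hij (by fin_cases i <;> decide)
    · exact ⟨by fin_cases i <;> simp_all, σ, hUV hσ, h1, h2, h3⟩
    · exact ⟨by fin_cases i <;> simp_all, σ, hσ, h1, h2, h3⟩
  · rintro ⟨hi, σ, hσ, h1, h2, h3⟩
    rcases hi with rfl | rfl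
    · exact ⟨2, by decide, σ, hσ, h1, h2, h3⟩
    · exact ⟨2, by decide, σ, hσ, h1, h2, h3⟩

lemma rejLvl2 (J : Set OLit) (ℓ : OLit → ℕ) (i : Fin 2) (π : Rule) :
    rejLvl ![P, V] J ℓ i π ↔ i = 0 ∧ RejLvlBy V J ℓ π := by
  constructor
  · rintro ⟨j, hij, σ, hσ, h1, h2, h3⟩
    rcases (show j = 0 ∨ j = 1 by fin_cases j <;> simp) with rfl | rfl
    · exact absurd hij (by fin_cases i <;> decide)
    · exact ⟨by fin_cases i <;> simp_all, σ, hσ, h1, h2, h3⟩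
  · rintro ⟨rfl, σ, hσ, h1, h2, h3⟩
    exact ⟨1, by decide, σ, hσ, h1, h2, h3⟩

lemma modelCond_iff (hUV : U ⊆ V) (J : Set OLit) (ℓ : OLit → ℕ) :
    (∀ i : Fin 3, ∀ π ∈ ![P, U, V] i, ¬ rejLvl ![P, U, V] J ℓ i π → satRule J π) ↔
      (∀ i : Fin 2, ∀ π ∈ ![P, V] i, ¬ rejLvl ![P, V] J ℓ i π → satRule J π) := by
  constructor
  · intro h i π hπ hr
    rw [rejLvl2] at hr
    rcases (show i = 0 ∨ i = 1 by fin_cases i <;> simp) with rfl | rfl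
    · refine h 0 π hπ ?_
      rw [rejLvl3 hUV]
      rintro ⟨-, hrb⟩
      exact hr ⟨rfl, hrb⟩
    · refine h 2 π hπ ?_
      rw [rejLvl3 hUV]
      rintro ⟨h0 | h0, -⟩ <;> simp at h0
  · intro h i π hπ hr
    rw [rejLvl3 hUV] at hr
    rcases (show i = 0 ∨ i = 1 ∨ i = 2 by fin_cases i <;> simp) with rfl | rfl | rfl
    · refine h 0 π hπ ?_
      rw [rejLvl2]
      rintro ⟨-, hrb⟩
      exact hr ⟨Or.inl rfl, hrb⟩
    · refine h 1 π (hUV hπ) ?_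
      rw [rejLvl2]
      rintro ⟨h0, -⟩
      simp at h0
    · refine h 1 π hπ ?_
      rw [rejLvl2]
      rintro ⟨h0, -⟩
      simp at h0

end Aux

/-- augmentation: if U ⊆ V then WS'(⟨P, U, V⟩) = WS'(⟨P, V⟩) and
RD'(⟨P, U, V⟩) = RD'(⟨P, V⟩). -/
theorem augmentation (P U V : Set Rule) (hUV : U ⊆ V) :
    {J : Set OLit | isExtWS ![P, U, V] J} = {J : Set OLit | isExtWS ![P, V] J} ∧
    {J : Set OLit | isExtRD ![P, U, V] J} = {J : Set OLit | isExtRD ![P, V] J} := by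
  constructor
  · ext J
    simp only [Set.mem_setOf_eq, isExtWS]
    refine and_congr Iff.rfl (exists_congr fun ℓ => and_congr (modelCond_iff hUV J ℓ) ?_)
    exact forall₂_congr fun l _ =>
      exRem_iff hUV (star J) (fun π => π.head = Lit.obj l ∧ satBody J π.body ∧
        supLevel ℓ π.body < ℓ l)
  · ext J
    simp only [Set.mem_setOf_eq, isExtRD]
    refine and_congr Iff.rfl ?_
    constructor <;> intro h <;> rw [h] <;> exact Set.iUnion_congr fun k =>
      (TIter_eq hUV J k) ▸ rfl

end RuleUpdates
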